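/- arXiv:2207.10827 — 4 statements merged into one kernel-verified Lean document; each statement's English description precedes it below -/
import Mathlib

section
/- Let d, n be positive integers, let V₀ and V be symmetric positive definite d×d real matrices with V ⪰ V₀ in the Loewner order, let Δ₀ ∈ ℝ^{d×n} and S ∈ ℝ^{d×n}, and let Δ = V⁻¹ (V₀ Δ₀ + S). Then √(Tr(Δᵀ V Δ)) ≤ √(Tr(Sᵀ V⁻¹ S)) + √(Tr(Δ₀ᵀ V₀ Δ₀)). -/
/-!
Writing `M = V₀ Δ₀ + S`, the left-hand side is `√(Tr(Mᵀ V⁻¹ M))`, the `V⁻¹`-weighted Frobenius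
norm of `M`. Since `W = Rᵀ R` for a PSD `W`, a weighted Frobenius norm is the plain Frobenius
norm of `R M`, so it satisfies the triangle inequality. The term of `V₀ Δ₀` is then bounded via
`V₀ V⁻¹ V₀ ⪯ V₀`: with `D = V₀ - V₀ V⁻¹ V₀` and `X = V⁻¹ V₀` one has
`D = D V₀⁻¹ D + Xᵀ (V - V₀) X`, a sum of two PSD matrices when `V₀ ⪯ V`.
-/

open Matrix

namespace Matrix

variable {m k : Type*} [Fintype m]

attribute [local instance] Matrix.frobeniusNormedAddCommGroup in
theorem sqrt_trace_transpose_mul_self [Fintype k] (A : Matrix m k ℝ) :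
    √(Aᵀ * A).trace = ‖A‖ := by
  rw [frobenius_norm_def, ← Real.sqrt_eq_rpow, Finset.sum_comm]
  simp [trace, mul_apply, sq]

open scoped MatrixOrder in
attribute [local instance] Matrix.frobeniusNormedAddCommGroup in
theorem sqrt_trace_transpose_mul_mul_add_le [Fintype k] [DecidableEq m] {W : Matrix m m ℝ}
    (hW : W.PosSemidef) (A B : Matrix m k ℝ) :
    √((A + B)ᵀ * W * (A + B)).trace ≤ √(Aᵀ * W * A).trace + √(Bᵀ * W * B).trace := by
  obtain ⟨R, rfl⟩ := CStarAlgebra.nonneg_iff_eq_star_mul_self.mp hW.nonneg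
  have weighted_eq_norm (N : Matrix m k ℝ) : √(Nᵀ * (star R * R) * N).trace = ‖R * N‖ := by
    rw [← sqrt_trace_transpose_mul_self, transpose_mul, star_eq_conjTranspose,
      conjTranspose_eq_transpose_of_trivial]
    simp only [Matrix.mul_assoc]
  rw [weighted_eq_norm, weighted_eq_norm, weighted_eq_norm, Matrix.mul_add]
  exact norm_add_le _ _

theorem sub_mul_inv_mul_eq {R : Type*} [DecidableEq m] [CommRing R] {V₀ V : Matrix m m R}
    (hV₀ : IsUnit V₀) (hV : IsUnit V) :
    V₀ - V₀ * V⁻¹ * V₀ = (V₀ - V₀ * V⁻¹ * V₀) * V₀⁻¹ * (V₀ - V₀ * V⁻¹ * V₀)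
      + V₀ * V⁻¹ * (V - V₀) * (V⁻¹ * V₀) := by
  rw [isUnit_iff_isUnit_det] at hV₀ hV
  simp only [Matrix.mul_sub, Matrix.sub_mul, Matrix.mul_assoc, mul_nonsing_inv_cancel_left _ _ hV,
    mul_nonsing_inv _ hV₀, Matrix.one_mul, Matrix.mul_one]
  abel

open scoped ComplexOrder in
theorem PosSemidef.sub_mul_inv_mul_of_le {𝕜 : Type*} [DecidableEq m] [RCLike 𝕜]
    {V₀ V : Matrix m m 𝕜} (hV₀ : V₀.PosDef) (hV : V.PosDef) (hle : (V - V₀).PosSemidef) :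
    (V₀ - V₀ * V⁻¹ * V₀).PosSemidef := by
  have hD : (V₀ - V₀ * V⁻¹ * V₀)ᴴ = V₀ - V₀ * V⁻¹ * V₀ := by
    simp [conjTranspose_nonsing_inv, hV₀.isHermitian.eq, hV.isHermitian.eq, Matrix.mul_assoc]
  have hX : (V⁻¹ * V₀)ᴴ = V₀ * V⁻¹ := by
    simp [conjTranspose_nonsing_inv, hV₀.isHermitian.eq, hV.isHermitian.eq]
  have h₁ := hV₀.inv.posSemidef.conjTranspose_mul_mul_same (V₀ - V₀ * V⁻¹ * V₀)
  have h₂ := hle.conjTranspose_mul_mul_same (V⁻¹ * V₀)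
  rw [hD] at h₁
  rw [hX] at h₂
  rw [sub_mul_inv_mul_eq hV₀.isUnit hV.isUnit]
  exact h₁.add h₂

theorem transpose_inv_mul_mul_inv_mul {R : Type*} [DecidableEq m] [CommRing R]
    {V : Matrix m m R} (hV_symm : V.IsSymm) (hV : IsUnit V) (M : Matrix m k R) :
    (V⁻¹ * M)ᵀ * V * (V⁻¹ * M) = Mᵀ * V⁻¹ * M := by
  rw [transpose_mul, transpose_nonsing_inv, hV_symm.eq, Matrix.mul_assoc, Matrix.mul_assoc,
    mul_nonsing_inv_cancel_left _ _ ((isUnit_iff_isUnit_det V).mp hV), Matrix.mul_assoc]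

theorem trace_transpose_mul_inv_mul_le [Fintype k] [DecidableEq m] {V₀ V : Matrix m m ℝ}
    (hV₀ : V₀.PosDef) (hV : V.PosDef) (hle : (V - V₀).PosSemidef) (A : Matrix m k ℝ) :
    ((V₀ * A)ᵀ * V⁻¹ * (V₀ * A)).trace ≤ (Aᵀ * V₀ * A).trace := by
  have h := ((hle.sub_mul_inv_mul_of_le hV₀ hV).conjTranspose_mul_mul_same A).trace_nonneg
  rw [conjTranspose_eq_transpose_of_trivial, Matrix.mul_sub, Matrix.sub_mul, trace_sub] at h
  have hV₀_symm : V₀ᵀ = V₀ := by simpa using hV₀.isHermitian.eq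
  rw [transpose_mul, hV₀_symm]
  simp only [Matrix.mul_assoc] at h ⊢
  linarith

end Matrix

theorem stmt4_general (d n : ℕ)
    (V₀ V : Matrix (Fin d) (Fin d) ℝ) (hV₀ : V₀.PosDef) (hV : V.PosDef)
    (hle : (V - V₀).PosSemidef)
    (Δ₀ S : Matrix (Fin d) (Fin n) ℝ) :
    Real.sqrt (Matrix.trace ((V⁻¹ * (V₀ * Δ₀ + S))ᵀ * V * (V⁻¹ * (V₀ * Δ₀ + S))))
      ≤ Real.sqrt (Matrix.trace (Sᵀ * V⁻¹ * S))
        + Real.sqrt (Matrix.trace (Δ₀ᵀ * V₀ * Δ₀)) := by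
  have hV_symm : V.IsSymm := by simpa using hV.isHermitian
  rw [transpose_inv_mul_mul_inv_mul hV_symm hV.isUnit, add_comm]
  calc √(Matrix.trace ((S + V₀ * Δ₀)ᵀ * V⁻¹ * (S + V₀ * Δ₀)))
      ≤ √(Matrix.trace (Sᵀ * V⁻¹ * S)) + √(Matrix.trace ((V₀ * Δ₀)ᵀ * V⁻¹ * (V₀ * Δ₀))) :=
        sqrt_trace_transpose_mul_mul_add_le hV.inv.posSemidef S (V₀ * Δ₀)
    _ ≤ √(Matrix.trace (Sᵀ * V⁻¹ * S)) + √(Matrix.trace (Δ₀ᵀ * V₀ * Δ₀)) := by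
        gcongr
        exact trace_transpose_mul_inv_mul_le hV₀ hV hle Δ₀

/-- For symmetric positive definite `V₀ ⪯ V` and
`Δ = V⁻¹ (V₀ Δ₀ + S)`, the weighted error satisfies the triangle-type bound
`√(Tr(Δᵀ V Δ)) ≤ √(Tr(Sᵀ V⁻¹ S)) + √(Tr(Δ₀ᵀ V₀ Δ₀))`. -/
theorem stmt4 (d n : ℕ) (hd : 0 < d) (hn : 0 < n)
    (V₀ V : Matrix (Fin d) (Fin d) ℝ) (hV₀ : V₀.PosDef) (hV : V.PosDef)
    (hle : (V - V₀).PosSemidef)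
    (Δ₀ S : Matrix (Fin d) (Fin n) ℝ) :
    Real.sqrt (Matrix.trace ((V⁻¹ * (V₀ * Δ₀ + S))ᵀ * V * (V⁻¹ * (V₀ * Δ₀ + S))))
      ≤ Real.sqrt (Matrix.trace (Sᵀ * V⁻¹ * S))
        + Real.sqrt (Matrix.trace (Δ₀ᵀ * V₀ * Δ₀)) :=
  stmt4_general d n V₀ V hV₀ hV hle Δ₀ S
end

section
/- Let d, n be positive integers, X, Δ ∈ ℝ^{d×n}, V a symmetric positive definite d×d matrix, r ≥ 0 with Δ Δᵀ ⪯ r V⁻¹ in the Loewner order, and P an n×n symmetric positive semidefinite matrix. Then for any μ ≥ r + (1 + r) ‖X‖ ‖V‖^{1/2}, we have −μ ‖P‖_* V⁻¹ ⪯ (X + Δ) P (X + Δ)ᵀ − X P Xᵀ ⪯ μ ‖P‖_* V⁻¹. -/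
open Matrix

/-- The operator (spectral) norm of a real matrix: the norm of the induced linear map
between Euclidean spaces, `‖A‖ = max_{‖x‖ ≤ 1} ‖A x‖`. -/
noncomputable def opNorm {m n : Type*} [Fintype m] [Fintype n] [DecidableEq n]
    (A : Matrix m n ℝ) : ℝ :=
  ‖LinearMap.toContinuousLinearMap (Matrix.toEuclideanLin A)‖

/-!
Write `t = Tr P`, `W = V⁻¹` and `s = ‖X‖ ‖V‖^{1/2}`. The difference equals
`(X P Δᵀ + Δ P Xᵀ) + Δ P Δᵀ`. From `P ⪯ t I`, `X Xᵀ ⪯ ‖X‖² I` and `I ⪯ ‖V‖ W` we get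
`X P Xᵀ ⪯ s² t W`, and from the hypothesis on `Δ` we get `0 ⪯ Δ P Δᵀ ⪯ r t W`. The cross term is
controlled by expanding `(a X ∓ a⁻¹ Δ) P (a X ∓ a⁻¹ Δ)ᵀ ⪰ 0` with `a² = 1 / s`, which gives
`±(X P Δᵀ + Δ P Xᵀ) ⪯ s⁻¹ X P Xᵀ + s Δ P Δᵀ ⪯ (1 + r) s t W`; when `s = 0` we have `X = 0` and
there is no cross term.
-/

open scoped MatrixOrder Matrix.Norms.L2Operator

lemma opNorm_eq_l2_opNorm {m n : Type*} [Fintype m] [Fintype n] [DecidableEq n]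
    (A : Matrix m n ℝ) : opNorm A = ‖A‖ :=
  rfl

namespace Matrix

open scoped ComplexOrder in
lemma mul_mul_conjTranspose_le_mul_mul_conjTranspose {𝕜 m k : Type*} [RCLike 𝕜] [Fintype m]
    [Fintype k] {M N : Matrix m m 𝕜} (h : M ≤ N) (A : Matrix k m 𝕜) : A * M * Aᴴ ≤ A * N * Aᴴ := by
  rw [le_iff] at h ⊢
  simpa only [Matrix.mul_sub, Matrix.sub_mul] using h.mul_mul_conjTranspose_same A

variable {m k : Type*} [Fintype m]

lemma dotProduct_self_eq_norm_sq (v : m → ℝ) :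
    v ⬝ᵥ v = ‖(WithLp.toLp 2 v : EuclideanSpace ℝ m)‖ ^ 2 := by
  rw [EuclideanSpace.real_norm_sq_eq]
  simp [dotProduct, sq]

lemma le_smul_one_of_dotProduct_mulVec_le [DecidableEq m] {M : Matrix m m ℝ}
    (hM : M.IsHermitian) {c : ℝ} (h : ∀ x, x ⬝ᵥ (M *ᵥ x) ≤ c * (x ⬝ᵥ x)) :
    M ≤ c • (1 : Matrix m m ℝ) := by
  refine .of_dotProduct_mulVec_nonneg ((isHermitian_one.smul (IsSelfAdjoint.all c)).sub hM)
    fun x => ?_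
  simpa [sub_mulVec, dotProduct_sub, smul_mulVec] using h x

lemma mul_conjTranspose_le_norm_sq_smul_one [Fintype k] [DecidableEq m] [DecidableEq k]
    (A : Matrix m k ℝ) : A * Aᴴ ≤ ‖A‖ ^ 2 • (1 : Matrix m m ℝ) := by
  refine le_smul_one_of_dotProduct_mulVec_le (isHermitian_mul_conjTranspose_self A)
    fun x => ?_
  have hbound := l2_opNorm_mulVec Aᴴ (WithLp.toLp 2 x)
  rw [l2_opNorm_conjTranspose] at hbound
  have hquad : x ⬝ᵥ ((A * Aᴴ) *ᵥ x) = (Aᴴ *ᵥ x) ⬝ᵥ (Aᴴ *ᵥ x) := by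
    rw [← mulVec_mulVec, dotProduct_mulVec, conjTranspose_eq_transpose_of_trivial,
      mulVec_transpose]
  rw [hquad, dotProduct_self_eq_norm_sq, dotProduct_self_eq_norm_sq, ← mul_pow]
  exact pow_le_pow_left₀ (norm_nonneg _) hbound 2

lemma PosSemidef.exists_eq_conjTranspose_mul_self [DecidableEq m] {A : Matrix m m ℝ}
    (hA : A.PosSemidef) : ∃ S : Matrix m m ℝ, A = Sᴴ * S :=
  ⟨CFC.sqrt A, by rw [(CFC.sqrt_nonneg A).posSemidef.1.eq, CFC.sqrt_mul_sqrt_self A hA.nonneg]⟩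

lemma PosDef.one_le_norm_smul_inv [DecidableEq m] {V : Matrix m m ℝ} (hV : V.PosDef) :
    1 ≤ ‖V‖ • V⁻¹ := by
  have hsq : V * V ≤ ‖V‖ • V := by
    obtain ⟨S, rfl⟩ := hV.posSemidef.exists_eq_conjTranspose_mul_self
    have h := star_left_conjugate_le_conjugate (mul_conjTranspose_le_norm_sq_smul_one S) S
    rw [l2_opNorm_conjTranspose_mul_self, ← sq ‖S‖]
    simpa only [star_eq_conjTranspose, mul_assoc, mul_smul_comm, smul_mul_assoc, mul_one]
      using h
  have hdet : IsUnit V.det := (isUnit_iff_isUnit_det V).mp hV.isUnit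
  have h := IsSelfAdjoint.conjugate_le_conjugate (c := V⁻¹) hsq hV.1.inv
  simpa only [mul_smul_comm, smul_mul_assoc, ← mul_assoc, nonsing_inv_mul _ hdet, one_mul,
    mul_nonsing_inv _ hdet] using h

lemma conjTranspose_mul_self_le_trace_smul_one [Fintype k] [DecidableEq m] (B : Matrix k m ℝ) :
    Bᴴ * B ≤ (Bᴴ * B).trace • (1 : Matrix m m ℝ) := by
  refine le_smul_one_of_dotProduct_mulVec_le (isHermitian_conjTranspose_mul_self B)
    fun x => ?_
  have htrace : (Bᴴ * B).trace = ∑ i, ∑ j, B i j ^ 2 := by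
    simp only [trace, diag, mul_apply, conjTranspose_apply, star_trivial, sq]
    exact Finset.sum_comm
  have hquad : x ⬝ᵥ ((Bᴴ * B) *ᵥ x) = ∑ i, (∑ j, B i j * x j) ^ 2 := by
    rw [← mulVec_mulVec, dotProduct_mulVec, conjTranspose_eq_transpose_of_trivial,
      vecMul_transpose]
    simp [dotProduct, mulVec, sq]
  rw [htrace, hquad, Finset.sum_mul]
  exact Finset.sum_le_sum fun i _ => by
    simpa [dotProduct, sq] using Finset.sum_mul_sq_le_sq_mul_sq Finset.univ (B i) x

lemma PosSemidef.le_trace_smul_one [DecidableEq m] {P : Matrix m m ℝ} (hP : P.PosSemidef) :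
    P ≤ P.trace • (1 : Matrix m m ℝ) := by
  obtain ⟨S, rfl⟩ := hP.exists_eq_conjTranspose_mul_self
  exact conjTranspose_mul_self_le_trace_smul_one S

lemma PosSemidef.mul_mul_conjTranspose_le_trace_smul [Fintype k] [DecidableEq m]
    {P : Matrix m m ℝ} (hP : P.PosSemidef) (A : Matrix k m ℝ) :
    A * P * Aᴴ ≤ P.trace • (A * Aᴴ) := by
  simpa only [Matrix.mul_smul, Matrix.smul_mul, Matrix.mul_one]
    using mul_mul_conjTranspose_le_mul_mul_conjTranspose hP.le_trace_smul_one A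

lemma PosSemidef.mul_mul_conjTranspose_le_smul_of_le [Fintype k] [DecidableEq m]
    {P : Matrix m m ℝ} (hP : P.PosSemidef) {A : Matrix k m ℝ} {W : Matrix k k ℝ} {r : ℝ}
    (hA : A * Aᴴ ≤ r • W) : A * P * Aᴴ ≤ r • P.trace • W :=
  calc A * P * Aᴴ ≤ P.trace • (A * Aᴴ) := hP.mul_mul_conjTranspose_le_trace_smul A
    _ ≤ P.trace • (r • W) := smul_le_smul_of_nonneg_left hA hP.trace_nonneg
    _ = r • P.trace • W := smul_comm _ _ _

lemma PosSemidef.mul_mul_conjTranspose_le_norm_smul_inv [Fintype k] [DecidableEq m]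
    [DecidableEq k] {P : Matrix m m ℝ} (hP : P.PosSemidef) {V : Matrix k k ℝ} (hV : V.PosDef)
    (A : Matrix k m ℝ) : A * P * Aᴴ ≤ (‖A‖ * √‖V‖) ^ 2 • P.trace • V⁻¹ := by
  refine hP.mul_mul_conjTranspose_le_smul_of_le ?_
  calc A * Aᴴ ≤ ‖A‖ ^ 2 • (1 : Matrix k k ℝ) := mul_conjTranspose_le_norm_sq_smul_one A
    _ ≤ ‖A‖ ^ 2 • ‖V‖ • V⁻¹ := smul_le_smul_of_nonneg_left hV.one_le_norm_smul_inv (sq_nonneg _)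
    _ = (‖A‖ * √‖V‖) ^ 2 • V⁻¹ := by rw [smul_smul, mul_pow, Real.sq_sqrt (norm_nonneg V)]

lemma PosSemidef.mul_mul_conjTranspose_add_le [Fintype k] {P : Matrix m m ℝ} (hP : P.PosSemidef)
    (A B : Matrix k m ℝ) {ε : ℝ} (hε : 0 < ε) :
    A * P * Bᴴ + B * P * Aᴴ ≤ ε • (A * P * Aᴴ) + ε⁻¹ • (B * P * Bᴴ) := by
  obtain ⟨a, ha, rfl⟩ : ∃ a : ℝ, 0 < a ∧ ε = a ^ 2 :=
    ⟨√ε, Real.sqrt_pos.mpr hε, (Real.sq_sqrt hε.le).symm⟩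
  rw [← sub_nonneg]
  convert (hP.mul_mul_conjTranspose_same (a • A - a⁻¹ • B)).nonneg using 1
  simp only [conjTranspose_sub, conjTranspose_smul, star_trivial, Matrix.sub_mul, Matrix.mul_sub,
    Matrix.smul_mul, Matrix.mul_smul]
  match_scalars <;> field_simp

lemma PosSemidef.mul_mul_conjTranspose_add_mem_Icc [Fintype k] {P : Matrix m m ℝ}
    (hP : P.PosSemidef) {A B : Matrix k m ℝ} {W : Matrix k k ℝ} {s r : ℝ} (hs : 0 < s)
    (hA : A * P * Aᴴ ≤ s ^ 2 • W) (hB : B * P * Bᴴ ≤ r • W) :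
    A * P * Bᴴ + B * P * Aᴴ ∈ Set.Icc (-((s * (1 + r)) • W)) ((s * (1 + r)) • W) := by
  have key : ∀ C : Matrix k m ℝ, C * P * Cᴴ ≤ r • W →
      A * P * Cᴴ + C * P * Aᴴ ≤ (s * (1 + r)) • W := fun C hC =>
    calc A * P * Cᴴ + C * P * Aᴴ ≤ s⁻¹ • (A * P * Aᴴ) + s⁻¹⁻¹ • (C * P * Cᴴ) :=
          hP.mul_mul_conjTranspose_add_le A C (inv_pos.mpr hs)
      _ ≤ s⁻¹ • (s ^ 2 • W) + s • (r • W) := by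
          rw [inv_inv]
          gcongr
      _ = (s * (1 + r)) • W := by
          rw [smul_smul, smul_smul, ← add_smul]
          congr 1
          field_simp
  refine ⟨neg_le.mpr ?_, key B hB⟩
  have hB' : -B * P * (-B)ᴴ ≤ r • W := by
    simpa only [conjTranspose_neg, Matrix.mul_neg, Matrix.neg_mul, neg_neg] using hB
  simpa only [conjTranspose_neg, Matrix.mul_neg, Matrix.neg_mul, neg_add] using key (-B) hB'

lemma PosSemidef.mul_mul_conjTranspose_add_mem_Icc_of_posDef [Fintype k] [DecidableEq m]
    [DecidableEq k] {P : Matrix m m ℝ} (hP : P.PosSemidef) {V : Matrix k k ℝ} (hV : V.PosDef)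
    {r : ℝ} (X : Matrix k m ℝ) {Δ : Matrix k m ℝ} (hΔ : Δ * Δᴴ ≤ r • V⁻¹) :
    X * P * Δᴴ + Δ * P * Xᴴ ∈ Set.Icc (-((‖X‖ * √‖V‖ * (1 + r)) • P.trace • V⁻¹))
      ((‖X‖ * √‖V‖ * (1 + r)) • P.trace • V⁻¹) := by
  rcases eq_or_ne X 0 with rfl | hX
  · simp
  -- a nonzero `X` has a row, so the positive definite `V` is nonzero
  obtain ⟨i, -, -⟩ : ∃ i j, X i j ≠ 0 := by
    by_contra! h
    exact hX (ext h)
  have hV0 : V ≠ 0 := fun h => (hV.diag_pos (i := i)).ne' (by simp [h])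
  have hs : 0 < ‖X‖ * √‖V‖ :=
    mul_pos (norm_pos_iff.mpr hX) (Real.sqrt_pos.mpr (norm_pos_iff.mpr hV0))
  exact hP.mul_mul_conjTranspose_add_mem_Icc hs (hP.mul_mul_conjTranspose_le_norm_smul_inv hV X)
    (hP.mul_mul_conjTranspose_le_smul_of_le hΔ)

end Matrix

theorem stmt8_general (d n : ℕ)
    (X Δ : Matrix (Fin d) (Fin n) ℝ)
    (V : Matrix (Fin d) (Fin d) ℝ) (hV : V.PosDef)
    (r : ℝ) (hr : 0 ≤ r) (hΔ : (r • V⁻¹ - Δ * Δᵀ).PosSemidef)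
    (P : Matrix (Fin n) (Fin n) ℝ) (hP : P.PosSemidef)
    (μ : ℝ) (hμ : r + (1 + r) * opNorm X * Real.sqrt (opNorm V) ≤ μ) :
    (((X + Δ) * P * (X + Δ)ᵀ - X * P * Xᵀ) - (-((μ * P.trace) • V⁻¹))).PosSemidef ∧
    ((μ * P.trace) • V⁻¹ - ((X + Δ) * P * (X + Δ)ᵀ - X * P * Xᵀ)).PosSemidef := by
  simp only [← conjTranspose_eq_transpose_of_trivial] at hΔ ⊢
  rw [opNorm_eq_l2_opNorm, opNorm_eq_l2_opNorm] at hμ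
  have hW : 0 ≤ P.trace • V⁻¹ := smul_nonneg hP.trace_nonneg hV.inv.posSemidef.nonneg
  have hcross := hP.mul_mul_conjTranspose_add_mem_Icc_of_posDef hV X (le_iff.mpr hΔ)
  have hΔPΔ := hP.mul_mul_conjTranspose_le_smul_of_le (le_iff.mpr hΔ)
  have hexpand : (X + Δ) * P * (X + Δ)ᴴ - X * P * Xᴴ
      = (X * P * Δᴴ + Δ * P * Xᴴ) + Δ * P * Δᴴ := by
    simp only [conjTranspose_add, Matrix.add_mul, Matrix.mul_add]
    abel
  rw [← le_iff, ← le_iff, hexpand, mul_smul]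
  constructor
  · calc -(μ • P.trace • V⁻¹) ≤ -((‖X‖ * √‖V‖ * (1 + r)) • P.trace • V⁻¹) :=
          neg_le_neg (smul_le_smul_of_nonneg_right (by nlinarith) hW)
      _ ≤ X * P * Δᴴ + Δ * P * Xᴴ := hcross.1
      _ ≤ _ := le_add_of_nonneg_right (hP.mul_mul_conjTranspose_same Δ).nonneg
  · calc _ ≤ (‖X‖ * √‖V‖ * (1 + r)) • P.trace • V⁻¹ + r • P.trace • V⁻¹ :=
          add_le_add hcross.2 hΔPΔ
      _ = (r + (1 + r) * ‖X‖ * √‖V‖) • P.trace • V⁻¹ := by rw [← add_smul]; ring_nf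
      _ ≤ μ • P.trace • V⁻¹ := smul_le_smul_of_nonneg_right hμ hW

/-- Matrix-perturbation bound for the dual SDP: if `Δ Δᵀ ⪯ r V⁻¹`,
`P ⪰ 0` and `μ ≥ r + (1+r) ‖X‖ ‖V‖^{1/2}`, then
`-μ ‖P‖_* V⁻¹ ⪯ (X+Δ) P (X+Δ)ᵀ - X P Xᵀ ⪯ μ ‖P‖_* V⁻¹`
(for positive semidefinite `P` the trace norm `‖P‖_*` equals `Tr P`). -/
theorem stmt8 (d n : ℕ) (hd : 0 < d) (hn : 0 < n)
    (X Δ : Matrix (Fin d) (Fin n) ℝ)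
    (V : Matrix (Fin d) (Fin d) ℝ) (hV : V.PosDef)
    (r : ℝ) (hr : 0 ≤ r) (hΔ : (r • V⁻¹ - Δ * Δᵀ).PosSemidef)
    (P : Matrix (Fin n) (Fin n) ℝ) (hP : P.PosSemidef)
    (μ : ℝ) (hμ : r + (1 + r) * opNorm X * Real.sqrt (opNorm V) ≤ μ) :
    (((X + Δ) * P * (X + Δ)ᵀ - X * P * Xᵀ) - (-((μ * P.trace) • V⁻¹))).PosSemidef ∧
    ((μ * P.trace) • V⁻¹ - ((X + Δ) * P * (X + Δ)ᵀ - X * P * Xᵀ)).PosSemidef :=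
  stmt8_general d n X Δ V hV r hr hΔ P hP μ hμ
end

section
/- Let n, m be positive integers, α₀ > 0, σ > 0, ν ≥ α₀σ², and set κ = √(2ν/(α₀σ²)) and γ = 1/(2κ²). Let A ∈ ℝ^{n×n}, B ∈ ℝ^{n×m}, K ∈ ℝ^{m×n}, and let Q ∈ ℝ^{n×n}, R ∈ ℝ^{m×m} be symmetric with Q ⪰ α₀ I_n and R ⪰ α₀ I_m. Let μ > 0 and let V be a symmetric positive definite (n+m)×(n+m) matrix with V ⪰ (4νμ/(α₀σ²)) I_{n+m}. Suppose P is an n×n symmetric positive semidefinite matrix with trace norm ‖P‖_* ≤ ν/σ² satisfying P ⪰ Q + Kᵀ R K + (A + BK)ᵀ P (A + BK) − 2 μ ‖P‖_* Eᵀ V⁻¹ E, where E ∈ ℝ^{(n+m)×n} is the matrix obtained by stacking I_n on top of K. Then: (i) P ⪰ (α₀/2) I_n + (α₀/2) Kᵀ K + (A + BK)ᵀ P (A + BK); (ii) (α₀/2) I_n ⪯ P ⪯ (ν/σ²) I_n, so P is positive definite; (iii) ‖K‖ ≤ κ; and (iv) ‖P^{1/2} (A + BK) P^{−1/2}‖ ≤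 √(1 − κ⁻²) ≤ 1 − γ. -/
/-!
Write `E = [I; K]` and `s = 2 μ ‖P‖_*`. Since `V ⪰ c I` with `c = 4νμ/(α₀σ²)`, antitonicity of
the inverse in the Loewner order gives `s V⁻¹ ⪯ (s/c) I ⪯ (α₀/2) I`, so the exploration penalty
is at most `(α₀/2) EᵀE = (α₀/2)(I + KᵀK)`. Together with `Q ⪰ α₀ I` and `R ⪰ α₀ I` this turns the
Riccati-type inequality into the Lyapunov inequality (i). Dropping nonnegative terms from (i)
gives `P ⪰ (α₀/2) I` and `(α₀/2) KᵀK ⪯ P ⪯ Tr(P) I ⪯ (ν/σ²) I`, hence `‖K‖² ≤ κ²`. With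
`S = P^{1/2}` and `L = S (A+BK) S⁻¹`, conjugating (i) by `S⁻¹` gives
`LᵀL ⪯ I - (α₀/2) P⁻¹ ⪯ (1 - κ⁻²) I`, and finally `√(1 - t) ≤ 1 - t/2`.
-/

open Matrix

/-- The positive semidefinite square root of a positive semidefinite matrix (the definition
`Matrix.PosSemidef.sqrt` of the older Mathlib, which has since been removed). -/
noncomputable def Matrix.PosSemidef.sqrt {n : Type*} [Fintype n] [DecidableEq n]
    {A : Matrix n n ℝ} (hA : A.PosSemidef) : Matrix n n ℝ :=
  hA.1.eigenvectorUnitary.1 * diagonal ((↑) ∘ (√·) ∘ hA.1.eigenvalues) *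
  (star hA.1.eigenvectorUnitary : Matrix n n ℝ)

open scoped MatrixOrder

theorem EuclideanSpace.norm_eq_sqrt_dotProduct {ι : Type*} [Fintype ι]
    (x : EuclideanSpace ℝ ι) : ‖x‖ = √(x.ofLp ⬝ᵥ x.ofLp) := by
  rw [norm_eq_sqrt_real_inner, EuclideanSpace.inner_eq_star_dotProduct, star_trivial]

namespace Matrix

variable {m n : Type*} [Fintype m] [Fintype n]

theorem PosSemidef.sqrt_eq_cfcSqrt [DecidableEq n] {A : Matrix n n ℝ} (hA : A.PosSemidef) :
    hA.sqrt = CFC.sqrt A := by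
  rw [CFC.sqrt_eq_cfc, cfc_nnreal_eq_real _ A, hA.1.cfc_eq]
  simp only [IsHermitian.cfc, PosSemidef.sqrt, Unitary.conjStarAlgAut_apply]
  congr 3
  funext i
  simp [max_eq_left (hA.eigenvalues_nonneg i)]

theorem le_iff_dotProduct_mulVec_le {A B : Matrix n n ℝ} :
    A ≤ B ↔ (B - A).IsHermitian ∧ ∀ x, x ⬝ᵥ A *ᵥ x ≤ x ⬝ᵥ B *ᵥ x := by
  simp [le_iff, posSemidef_iff_dotProduct_mulVec, sub_mulVec, dotProduct_sub]

theorem transpose_mul_mul_le_transpose_mul_mul {A B : Matrix n n ℝ} (hAB : A ≤ B)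
    (C : Matrix n m ℝ) : Cᵀ * A * C ≤ Cᵀ * B * C := by
  rw [le_iff, ← Matrix.sub_mul, ← Matrix.mul_sub]
  simpa using (le_iff.1 hAB).conjTranspose_mul_mul_same C

theorem PosSemidef.le_trace_smul_one_s10 [DecidableEq n] {A : Matrix n n ℝ} (hA : A.PosSemidef) :
    A ≤ A.trace • 1 := by
  set U : Matrix n n ℝ := (hA.1.eigenvectorUnitary : Matrix n n ℝ)
  have hdiag :
      A.trace • 1 - A = U * diagonal (fun i ↦ A.trace - hA.1.eigenvalues i) * star U := by
    have hU : U * star U = 1 := Unitary.mul_star_self_of_mem hA.1.eigenvectorUnitary.2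
    have hsub : diagonal (fun i ↦ A.trace - hA.1.eigenvalues i)
        = A.trace • 1 - diagonal (RCLike.ofReal ∘ hA.1.eigenvalues) := by
      ext i j
      rcases eq_or_ne i j with rfl | hij <;> simp [*]
    nth_rewrite 2 [hA.1.spectral_theorem]
    rw [Unitary.conjStarAlgAut_apply, hsub, Matrix.mul_sub, Matrix.sub_mul, Matrix.mul_smul,
      Matrix.mul_one, Matrix.smul_mul, hU]
  rw [le_iff, hdiag]
  refine (posSemidef_diagonal_iff.2 fun i ↦ ?_).mul_mul_conjTranspose_same U
  rw [sub_nonneg, hA.1.trace_eq_sum_eigenvalues]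
  exact Finset.single_le_sum (fun j _ ↦ hA.eigenvalues_nonneg j) (Finset.mem_univ i)

theorem PosDef.inv_le_inv [DecidableEq n] {A B : Matrix n n ℝ} (hA : A.PosDef)
    (hAB : A ≤ B) : B⁻¹ ≤ A⁻¹ := by
  have hB : B.PosDef := by simpa using hA.add_posSemidef hAB
  -- The block matrix `[[B, 1], [1, A⁻¹]]` has Schur complements `B - A` and `A⁻¹ - B⁻¹`.
  let := hA.isUnit.invertible
  let := hB.isUnit.invertible
  let := hA.inv.isUnit.invertible
  have h := (PosDef.fromBlocks₂₂ B 1 hA.inv).2 (by simpa using le_iff.1 hAB)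
  exact le_iff.2 (by simpa using (PosDef.fromBlocks₁₁ 1 A⁻¹ hB).1 h)

theorem inv_smul_one [DecidableEq n] (c : ℝ) : (c • (1 : Matrix n n ℝ))⁻¹ = c⁻¹ • 1 := by
  rcases eq_or_ne c 0 with rfl | hc
  · simp
  · exact inv_eq_left_inv (by rw [smul_mul_smul_comm, inv_mul_cancel₀ hc, one_mul, one_smul])

theorem smul_one_le_smul_one [DecidableEq n] {a b : ℝ} (hab : a ≤ b) :
    a • (1 : Matrix n n ℝ) ≤ b • 1 :=
  smul_le_smul_of_nonneg_right hab PosSemidef.one.nonneg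

theorem smul_inv_le_smul_one [DecidableEq n] {V : Matrix n n ℝ} {a c s : ℝ} (hc : 0 < c)
    (hV : c • 1 ≤ V) (hs : 0 ≤ s) (hsc : s ≤ a * c) : s • V⁻¹ ≤ a • 1 := by
  have hVinv : V⁻¹ ≤ c⁻¹ • 1 := by
    rw [← inv_smul_one]
    exact (PosDef.one.smul hc).inv_le_inv hV
  calc s • V⁻¹ ≤ s • c⁻¹ • 1 := smul_le_smul_of_nonneg_left hVinv hs
    _ ≤ a • 1 := by
      rw [smul_smul]
      exact smul_one_le_smul_one ((mul_inv_le_iff₀ hc).2 hsc)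

theorem opNorm_le_sqrt_of_transpose_mul_self_le [DecidableEq n] {A : Matrix m n ℝ} {c : ℝ}
    (h : Aᵀ * A ≤ c • 1) : opNorm A ≤ √c := by
  refine ContinuousLinearMap.opNorm_le_bound _ (Real.sqrt_nonneg c) fun x ↦ ?_
  have hx := (le_iff_dotProduct_mulVec_le.1 h).2 x.ofLp
  rw [← mulVec_mulVec, dotProduct_mulVec, vecMul_transpose, smul_mulVec, one_mulVec,
    dotProduct_smul, smul_eq_mul] at hx
  rw [EuclideanSpace.norm_eq_sqrt_dotProduct, EuclideanSpace.norm_eq_sqrt_dotProduct,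
    ← Real.sqrt_mul' c (by simpa using dotProduct_star_self_nonneg x.ofLp)]
  exact Real.sqrt_le_sqrt hx

omit [Fintype n] in
theorem posDef_of_smul_one_le [DecidableEq n] {A : Matrix n n ℝ} {a : ℝ} (ha : 0 < a)
    (h : a • 1 ≤ A) : A.PosDef := by
  simpa using (PosDef.one.smul ha).add_posSemidef (le_iff.1 h)

theorem opNorm_sqrt_mul_mul_inv_sqrt_le [DecidableEq n] {P M : Matrix n n ℝ}
    (hP : P.PosSemidef) {a b : ℝ} (ha : 0 < a) (hM : a • 1 + Mᵀ * P * M ≤ P) (hPb : P ≤ b • 1) :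
    opNorm (hP.sqrt * M * hP.sqrt⁻¹) ≤ √(1 - a / b) := by
  have hMPM : 0 ≤ Mᵀ * P * M := by simpa using (hP.conjTranspose_mul_mul_same M).nonneg
  have hPdef : P.PosDef := posDef_of_smul_one_le ha ((le_add_of_nonneg_right hMPM).trans hM)
  rw [hP.sqrt_eq_cfcSqrt]
  set S := CFC.sqrt P
  have hSS : S * S = P := CFC.sqrt_mul_sqrt_self P hP.nonneg
  have hST : Sᵀ = S := by simpa using (CFC.sqrt_nonneg P).posSemidef.1.eq
  have hS : IsUnit S.det := (isUnit_iff_isUnit_det S).1 <|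
    isUnit_of_mul_isUnit_left (hSS ▸ hPdef.isUnit)
  have hSinvT : S⁻¹ᵀ = S⁻¹ := by rw [transpose_nonsing_inv, hST]
  have hSPS : S⁻¹ * P * S⁻¹ = 1 := by
    rw [← hSS, ← Matrix.mul_assoc, nonsing_inv_mul S hS, Matrix.one_mul, mul_nonsing_inv S hS]
  have hPinv : S⁻¹ * S⁻¹ = P⁻¹ := by rw [← hSS, Matrix.mul_inv_rev]
  have hPinv_ge : b⁻¹ • 1 ≤ P⁻¹ := by
    rw [← inv_smul_one]
    exact hPdef.inv_le_inv hPb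
  apply opNorm_le_sqrt_of_transpose_mul_self_le
  calc (S * M * S⁻¹)ᵀ * (S * M * S⁻¹) = S⁻¹ᵀ * (Mᵀ * P * M) * S⁻¹ := by
        rw [transpose_mul, transpose_mul, hST, hSinvT, ← hSS]; simp only [Matrix.mul_assoc]
    _ ≤ S⁻¹ᵀ * (P - a • 1) * S⁻¹ :=
        transpose_mul_mul_le_transpose_mul_mul (le_sub_iff_add_le'.2 hM) _
    _ = 1 - a • P⁻¹ := by
        rw [hSinvT, Matrix.mul_sub, Matrix.sub_mul, hSPS, Matrix.mul_smul, Matrix.mul_one,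
          Matrix.smul_mul, hPinv]
    _ ≤ 1 - a • b⁻¹ • 1 := by gcongr
    _ = (1 - a / b) • 1 := by rw [sub_smul, one_smul, smul_smul, div_eq_mul_inv]

theorem lyapunov_of_relaxedRiccati [DecidableEq m] [DecidableEq n]
    {P Q M : Matrix n n ℝ} {R : Matrix m m ℝ} {K : Matrix m n ℝ}
    {V : Matrix (n ⊕ m) (n ⊕ m) ℝ} {a s : ℝ} (hQ : a • 1 ≤ Q) (hR : a • 1 ≤ R)
    (hV : s • V⁻¹ ≤ (a / 2) • 1)
    (hRic : Q + Kᵀ * R * K + Mᵀ * P * M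
      - s • ((fromRows (1 : Matrix n n ℝ) K)ᵀ * V⁻¹ * fromRows (1 : Matrix n n ℝ) K) ≤ P) :
    (a / 2) • 1 + (a / 2) • (Kᵀ * K) + Mᵀ * P * M ≤ P := by
  set E := fromRows (1 : Matrix n n ℝ) K with hE
  have hEE : Eᵀ * E = 1 + Kᵀ * K := by
    rw [hE, transpose_fromRows, fromCols_mul_fromRows, transpose_one, Matrix.one_mul]
  have hRK : a • (Kᵀ * K) ≤ Kᵀ * R * K := by
    simpa using transpose_mul_mul_le_transpose_mul_mul hR K
  have hpen : Eᵀ * (s • V⁻¹) * E ≤ (a / 2) • (1 + Kᵀ * K) := by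
    simpa [hEE] using transpose_mul_mul_le_transpose_mul_mul hV E
  calc _ = a • 1 + a • (Kᵀ * K) + Mᵀ * P * M - (a / 2) • (1 + Kᵀ * K) := by module
    _ ≤ Q + Kᵀ * R * K + Mᵀ * P * M - Eᵀ * (s • V⁻¹) * E := by gcongr
    _ = Q + Kᵀ * R * K + Mᵀ * P * M - s • (Eᵀ * V⁻¹ * E) := by
      rw [Matrix.mul_smul, Matrix.smul_mul]
    _ ≤ P := hRic

theorem le_smul_one_of_smul_le [DecidableEq n] {X P : Matrix n n ℝ} {a b : ℝ} (ha : 0 < a)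
    (hX : a • X ≤ P) (hP : P ≤ b • 1) : X ≤ (b / a) • 1 :=
  calc X = a⁻¹ • a • X := by rw [inv_smul_smul₀ ha.ne']
    _ ≤ a⁻¹ • b • 1 := smul_le_smul_of_nonneg_left (hX.trans hP) (inv_nonneg.2 ha.le)
    _ = (b / a) • 1 := by rw [smul_smul, inv_mul_eq_div]

end Matrix

theorem Real.sqrt_one_sub_one_div_le {x : ℝ} (hx : 1 ≤ 2 * x) :
    √(1 - 1 / x) ≤ 1 - 1 / (2 * x) := by
  have hx0 : 0 < x := by linarith
  have ht : 1 / x ≤ 2 := by rw [div_le_iff₀ hx0]; linarith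
  rw [show 1 / (2 * x) = 1 / x / 2 by ring]
  exact Real.sqrt_le_iff.2 ⟨by linarith, by nlinarith [sq_nonneg (1 / x)]⟩

theorem stmt10_general (n m : ℕ)
    (α₀ σ ν : ℝ) (hα₀ : 0 < α₀) (hσ : 0 < σ) (hν : α₀ * σ ^ 2 ≤ ν)
    (κ γ : ℝ) (hκ : κ = Real.sqrt (2 * ν / (α₀ * σ ^ 2))) (hγ : γ = 1 / (2 * κ ^ 2))
    (A : Matrix (Fin n) (Fin n) ℝ) (B : Matrix (Fin n) (Fin m) ℝ)
    (K : Matrix (Fin m) (Fin n) ℝ)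
    (Q : Matrix (Fin n) (Fin n) ℝ) (R : Matrix (Fin m) (Fin m) ℝ)
    (hQ : (Q - α₀ • (1 : Matrix (Fin n) (Fin n) ℝ)).PosSemidef)
    (hR : (R - α₀ • (1 : Matrix (Fin m) (Fin m) ℝ)).PosSemidef)
    (μ : ℝ) (hμ : 0 < μ)
    (V : Matrix (Fin n ⊕ Fin m) (Fin n ⊕ Fin m) ℝ)
    (hVlb : (V - (4 * ν * μ / (α₀ * σ ^ 2)) •
        (1 : Matrix (Fin n ⊕ Fin m) (Fin n ⊕ Fin m) ℝ)).PosSemidef)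
    (P : Matrix (Fin n) (Fin n) ℝ) (hP : P.PosSemidef)
    (hPtr : P.trace ≤ ν / σ ^ 2)
    (hRic : (P - (Q + Kᵀ * R * K + (A + B * K)ᵀ * P * (A + B * K)
        - (2 * μ * P.trace) •
          ((Matrix.fromRows (1 : Matrix (Fin n) (Fin n) ℝ) K)ᵀ * V⁻¹ *
            Matrix.fromRows (1 : Matrix (Fin n) (Fin n) ℝ) K))).PosSemidef) :
    (P - ((α₀ / 2) • (1 : Matrix (Fin n) (Fin n) ℝ) + (α₀ / 2) • (Kᵀ * K)
        + (A + B * K)ᵀ * P * (A + B * K))).PosSemidef ∧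
    (P - (α₀ / 2) • (1 : Matrix (Fin n) (Fin n) ℝ)).PosSemidef ∧
    ((ν / σ ^ 2) • (1 : Matrix (Fin n) (Fin n) ℝ) - P).PosSemidef ∧
    P.PosDef ∧
    opNorm K ≤ κ ∧
    opNorm (hP.sqrt * (A + B * K) * hP.sqrt⁻¹) ≤ Real.sqrt (1 - 1 / κ ^ 2) ∧
    Real.sqrt (1 - 1 / κ ^ 2) ≤ 1 - γ := by
  have hσ2 : 0 < σ ^ 2 := by positivity
  have hν0 : 0 < ν := (by positivity : 0 < α₀ * σ ^ 2).trans_le hν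
  have hκ2 : κ ^ 2 = 2 * ν / (α₀ * σ ^ 2) := by rw [hκ, Real.sq_sqrt (by positivity)]
  set M := A + B * K
  have hpen : (2 * μ * P.trace) • V⁻¹ ≤ (α₀ / 2) • 1 := by
    refine smul_inv_le_smul_one (by positivity) hVlb
      (by have := hP.trace_nonneg; positivity) ?_
    rw [le_div_iff₀ hσ2] at hPtr
    field_simp
    nlinarith
  have hi : (α₀ / 2) • 1 + (α₀ / 2) • (Kᵀ * K) + Mᵀ * P * M ≤ P :=
    lyapunov_of_relaxedRiccati hQ hR hpen hRic
  have hI : 0 ≤ (α₀ / 2) • (1 : Matrix (Fin n) (Fin n) ℝ) :=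
    smul_nonneg (by positivity) PosSemidef.one.nonneg
  have hKK : 0 ≤ (α₀ / 2) • (Kᵀ * K) :=
    smul_nonneg (by positivity) (by simpa using (posSemidef_conjTranspose_mul_self K).nonneg)
  have hMPM : 0 ≤ Mᵀ * P * M := by simpa using (hP.conjTranspose_mul_mul_same M).nonneg
  have hLyap : (α₀ / 2) • 1 + Mᵀ * P * M ≤ P :=
    le_of_add_le_of_nonneg_left (by rwa [add_right_comm] at hi) hKK
  have hKP : (α₀ / 2) • (Kᵀ * K) ≤ P :=
    le_of_add_le_of_nonneg_right (le_of_add_le_of_nonneg_left hi hMPM) hI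
  have hlow : (α₀ / 2) • 1 ≤ P := le_of_add_le_of_nonneg_left hLyap hMPM
  have hup : P ≤ (ν / σ ^ 2) • 1 := hP.le_trace_smul_one_s10.trans (smul_one_le_smul_one hPtr)
  refine ⟨hi, hlow, hup, posDef_of_smul_one_le (by positivity) hlow, ?_, ?_, ?_⟩
  · rw [hκ]
    convert opNorm_le_sqrt_of_transpose_mul_self_le (le_smul_one_of_smul_le (by positivity) hKP hup)
      using 2
    field_simp
  · convert opNorm_sqrt_mul_mul_inv_sqrt_le hP (by positivity) hLyap hup using 3
    rw [hκ2]
    field_simp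
  · rw [hγ]
    refine Real.sqrt_one_sub_one_div_le ?_
    rw [hκ2, mul_div_assoc', le_div_iff₀ (by positivity)]
    linarith

/-- Strong stability of the relaxed-SDP controller: under the
Riccati-type inequality for the dual solution `P` (with the exploration penalty
`2 μ ‖P‖_* Eᵀ V⁻¹ E`, `E = [I_n; K]`, `V ⪰ (4νμ/(α₀σ²)) I`, `‖P‖_* ≤ ν/σ²`), one has
(i) `P ⪰ (α₀/2) I + (α₀/2) Kᵀ K + (A+BK)ᵀ P (A+BK)`;
(ii) `(α₀/2) I ⪯ P ⪯ (ν/σ²) I`, so `P` is positive definite;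
(iii) `‖K‖ ≤ κ`; and (iv) `‖P^{1/2} (A+BK) P^{-1/2}‖ ≤ √(1-κ⁻²) ≤ 1-γ`,
where `κ = √(2ν/(α₀σ²))` and `γ = 1/(2κ²)`. -/
theorem stmt10 (n m : ℕ) (hn : 0 < n) (hm : 0 < m)
    (α₀ σ ν : ℝ) (hα₀ : 0 < α₀) (hσ : 0 < σ) (hν : α₀ * σ ^ 2 ≤ ν)
    (κ γ : ℝ) (hκ : κ = Real.sqrt (2 * ν / (α₀ * σ ^ 2))) (hγ : γ = 1 / (2 * κ ^ 2))
    (A : Matrix (Fin n) (Fin n) ℝ) (B : Matrix (Fin n) (Fin m) ℝ)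
    (K : Matrix (Fin m) (Fin n) ℝ)
    (Q : Matrix (Fin n) (Fin n) ℝ) (R : Matrix (Fin m) (Fin m) ℝ)
    (hQsym : Q.IsHermitian) (hRsym : R.IsHermitian)
    (hQ : (Q - α₀ • (1 : Matrix (Fin n) (Fin n) ℝ)).PosSemidef)
    (hR : (R - α₀ • (1 : Matrix (Fin m) (Fin m) ℝ)).PosSemidef)
    (μ : ℝ) (hμ : 0 < μ)
    (V : Matrix (Fin n ⊕ Fin m) (Fin n ⊕ Fin m) ℝ) (hV : V.PosDef)
    (hVlb : (V - (4 * ν * μ / (α₀ * σ ^ 2)) •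
        (1 : Matrix (Fin n ⊕ Fin m) (Fin n ⊕ Fin m) ℝ)).PosSemidef)
    (P : Matrix (Fin n) (Fin n) ℝ) (hP : P.PosSemidef)
    (hPtr : P.trace ≤ ν / σ ^ 2)
    (hRic : (P - (Q + Kᵀ * R * K + (A + B * K)ᵀ * P * (A + B * K)
        - (2 * μ * P.trace) •
          ((Matrix.fromRows (1 : Matrix (Fin n) (Fin n) ℝ) K)ᵀ * V⁻¹ *
            Matrix.fromRows (1 : Matrix (Fin n) (Fin n) ℝ) K))).PosSemidef) :
    (P - ((α₀ / 2) • (1 : Matrix (Fin n) (Fin n) ℝ) + (α₀ / 2) • (Kᵀ * K)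
        + (A + B * K)ᵀ * P * (A + B * K))).PosSemidef ∧
    (P - (α₀ / 2) • (1 : Matrix (Fin n) (Fin n) ℝ)).PosSemidef ∧
    ((ν / σ ^ 2) • (1 : Matrix (Fin n) (Fin n) ℝ) - P).PosSemidef ∧
    P.PosDef ∧
    opNorm K ≤ κ ∧
    opNorm (hP.sqrt * (A + B * K) * hP.sqrt⁻¹) ≤ Real.sqrt (1 - 1 / κ ^ 2) ∧
    Real.sqrt (1 - 1 / κ ^ 2) ≤ 1 - γ :=
  stmt10_general n m α₀ σ ν hα₀ hσ hν κ γ hκ hγ A B K Q R hQ hR μ hμ V hVlb P hP hPtr hRic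
end

section
/- Let κ ≥ 1, 0 < γ < 1, 0 < χ < 1, and let τ be a positive integer with κ^{1/τ} (1 − γ/2) ≤ 1 − χ. Let L ≥ 0 and let 0 = k₀ < k₁ < ⋯ < k_l be integers with k_{j+1} − k_j ≥ τ for each j. Let (a_j)_{j=0}^{l} be nonnegative reals satisfying a_{j+1} ≤ κ (1 − γ/2)^{k_{j+1} − k_j} a_j + L for each j = 0, …, l−1. Then for every j, a_j ≤ (1 − χ)^{k_j} a₀ + L/χ. -/
/-- Minimum-average-dwell-time stability recursion: if switch times
satisfy `k_{j+1} - k_j ≥ τ` with `κ^{1/τ}(1-γ/2) ≤ 1-χ`, and the state norms satisfy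
`a_{j+1} ≤ κ (1-γ/2)^{k_{j+1}-k_j} a_j + L`, then `a_j ≤ (1-χ)^{k_j} a_0 + L/χ`. -/
theorem stmt13 (κ γ χ L : ℝ) (hκ : 1 ≤ κ) (hγ0 : 0 < γ) (hγ1 : γ < 1)
    (hχ0 : 0 < χ) (hχ1 : χ < 1) (τ : ℕ) (hτ : 0 < τ)
    (hcontr : κ ^ ((τ : ℝ)⁻¹) * (1 - γ / 2) ≤ 1 - χ)
    (hL : 0 ≤ L) (l : ℕ) (k : ℕ → ℕ) (hk0 : k 0 = 0)
    (hgap : ∀ j < l, k j + τ ≤ k (j + 1))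
    (a : ℕ → ℝ) (ha : ∀ j ≤ l, 0 ≤ a j)
    (hrec : ∀ j < l, a (j + 1) ≤ κ * (1 - γ / 2) ^ (k (j + 1) - k j) * a j + L) :
    ∀ j ≤ l, a j ≤ (1 - χ) ^ (k j) * a 0 + L / χ := by
  have hg2 : (0:ℝ) < 1 - γ / 2 := by linarith
  have hχ0' : (0:ℝ) < 1 - χ := by linarith
  have hχ1' : (1:ℝ) - χ ≤ 1 := by linarith
  have hκ0 : (0:ℝ) < κ := by linarith
  have key : ∀ d : ℕ, τ ≤ d → κ * (1 - γ / 2) ^ d ≤ (1 - χ) ^ d := by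
    intro d hd
    set c := κ ^ ((τ : ℝ)⁻¹) with hc
    have hc1 : (1:ℝ) ≤ c := Real.one_le_rpow hκ (by positivity)
    have hcd : κ ≤ c ^ d := by
      have : c ^ d = κ ^ ((τ : ℝ)⁻¹ * d) := by
        rw [hc, ← Real.rpow_natCast (κ ^ ((τ : ℝ)⁻¹)) d, ← Real.rpow_mul hκ0.le]
      rw [this]
      calc κ = κ ^ (1:ℝ) := (Real.rpow_one κ).symm
        _ ≤ κ ^ ((τ : ℝ)⁻¹ * d) := by
          apply Real.rpow_le_rpow_of_exponent_le hκ
          rw [inv_mul_eq_div, le_div_iff₀ (by exact_mod_cast hτ), one_mul]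
          exact_mod_cast hd
    calc κ * (1 - γ / 2) ^ d ≤ c ^ d * (1 - γ / 2) ^ d := by
          apply mul_le_mul_of_nonneg_right hcd (by positivity)
      _ = (c * (1 - γ / 2)) ^ d := (mul_pow _ _ _).symm
      _ ≤ (1 - χ) ^ d := pow_le_pow_left₀ (by positivity) hcontr d
  intro j
  induction j with
  | zero => intro _; rw [hk0, pow_zero, one_mul]
            nlinarith [ha 0 (Nat.zero_le l), div_nonneg hL hχ0.le]
  | succ n ih =>
    intro hjl
    have hnl : n < l := hjl
    have ihn := ih (Nat.le_of_lt hnl)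
    set d := k (n + 1) - k n with hd
    have hdτ : τ ≤ d := by
      have := hgap n hnl
      omega
    have hksum : k (n + 1) = k n + d := by
      have := hgap n hnl
      omega
    have hkey := key d hdτ
    have h1 : a (n + 1) ≤ (1 - χ) ^ d * a n + L := by
      calc a (n + 1) ≤ κ * (1 - γ / 2) ^ d * a n + L := hrec n hnl
        _ ≤ (1 - χ) ^ d * a n + L := by
            have := ha n (Nat.le_of_lt hnl)
            nlinarith
    have h2 : (1 - χ) ^ d * a n ≤ (1 - χ) ^ d * ((1 - χ) ^ (k n) * a 0 + L / χ) :=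
      mul_le_mul_of_nonneg_left ihn (by positivity)
    have hd1 : 1 ≤ d := le_trans hτ hdτ
    have h3 : (1 - χ) ^ d ≤ 1 - χ := by
      calc (1 - χ) ^ d ≤ (1 - χ) ^ 1 := pow_le_pow_of_le_one hχ0'.le hχ1' hd1
        _ = 1 - χ := pow_one _
    have h4 : (1 - χ) ^ d * (L / χ) + L ≤ L / χ := by
      have hLχ : 0 ≤ L / χ := div_nonneg hL hχ0.le
      have : (1 - χ) * (L / χ) + L ≤ L / χ := by
        have : (1 - χ) * (L / χ) + L = L / χ := by field_simp; ring
        linarith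
      nlinarith [mul_le_mul_of_nonneg_right h3 hLχ]
    calc a (n + 1) ≤ (1 - χ) ^ d * ((1 - χ) ^ (k n) * a 0 + L / χ) + L := by linarith
      _ = (1 - χ) ^ (k n + d) * a 0 + ((1 - χ) ^ d * (L / χ) + L) := by ring
      _ ≤ (1 - χ) ^ (k (n + 1)) * a 0 + L / χ := by
          rw [hksum]; rw [add_comm (k n) d] at *; linarith
end
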